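/- For every natural number n ≥ 1 and all real numbers x, s with x ≥ 0, setting Z m = L (2m) (Real.sqrt x) s - 2·s^m, one has Z (n-1) · Z (n+1) = (Z n - s^(n-1)·x)^2. -/
import Mathlib


/-- Bivariate Lucas polynomials. -/
def L : ℕ → ℝ → ℝ → ℝ
  | 0, _, _ => 2
  | 1, x, _ => x
  | n + 2, x, s => x * L (n + 1) x s + s * L n x s

lemma Lstep (n : ℕ) (y s : ℝ) : L (n + 2) y s = y * L (n + 1) y s + s * L n y s := rfl

lemma Ldouble (m : ℕ) (y s : ℝ) :
    L (2 * m + 4) y s = (y ^ 2 + 2 * s) * L (2 * m + 2) y s - s ^ 2 * L (2 * m) y s := by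
  rw [show 2 * m + 4 = (2 * m + 2) + 2 from rfl, Lstep (2 * m + 2),
      show 2 * m + 2 + 1 = (2 * m + 1) + 2 from rfl, Lstep (2 * m + 1),
      show 2 * m + 1 + 1 = 2 * m + 2 from rfl, Lstep (2 * m)]
  ring

lemma key (k : ℕ) (x s : ℝ) (hx : x ≥ 0) :
    (L (2 * k) (Real.sqrt x) s - 2 * s ^ k) *
        (L (2 * (k + 2)) (Real.sqrt x) s - 2 * s ^ (k + 2)) =
      ((L (2 * (k + 1)) (Real.sqrt x) s - 2 * s ^ (k + 1)) - s ^ k * x) ^ 2 := by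
  have hy : (Real.sqrt x) ^ 2 = x := Real.sq_sqrt hx
  set y := Real.sqrt x with hydef
  induction k with
  | zero =>
      have h0 : L 0 y s = 2 := rfl
      have h2 : L 2 y s = x + 2 * s := by
        have h : L 2 y s = y * y + s * 2 := rfl
        rw [h, ← hy]; ring
      have h4 : L 4 y s = (y ^ 2 + 2 * s) * L 2 y s - s ^ 2 * L 0 y s := by
        simpa using Ldouble 0 y s
      simp only [Nat.mul_zero, Nat.mul_one]
      rw [show 2 * (0 + 2) = 4 from rfl, show 2 * (0 + 1) = 2 from rfl, h4, h0, h2]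
      ring
  | succ k ih =>
      have r1 : L (2 * (k + 2)) y s = (x + 2 * s) * L (2 * (k + 1)) y s - s ^ 2 * L (2 * k) y s := by
        have h := Ldouble k y s
        rw [hy] at h
        rw [show 2 * (k + 2) = 2 * k + 4 from by ring, show 2 * (k + 1) = 2 * k + 2 from by ring]
        exact h
      have r2 : L (2 * (k + 3)) y s = (x + 2 * s) * L (2 * (k + 2)) y s - s ^ 2 * L (2 * (k + 1)) y s := by
        have h := Ldouble (k + 1) y s
        rw [hy] at h
        rw [show 2 * (k + 3) = 2 * (k + 1) + 4 from by ring, show 2 * (k + 2) = 2 * (k + 1) + 2 from by ring]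
        exact h
      rw [show k + 1 + 2 = k + 3 from rfl, show k + 1 + 1 = k + 2 from rfl, r2, r1]
      rw [r1] at ih
      linear_combination s ^ 2 * ih

theorem stmt_6 (n : ℕ) (hn : 1 ≤ n) (x s : ℝ) (hx : x ≥ 0) :
    (L (2 * (n - 1)) (Real.sqrt x) s - 2 * s ^ (n - 1)) *
        (L (2 * (n + 1)) (Real.sqrt x) s - 2 * s ^ (n + 1)) =
      ((L (2 * n) (Real.sqrt x) s - 2 * s ^ n) - s ^ (n - 1) * x) ^ 2 := by
  obtain ⟨k, rfl⟩ : ∃ k, n = k + 1 := ⟨n - 1, by omega⟩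
  simpa using key k x s hx
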